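/- Partial enforcement raises the static scale rule: if a fraction φ ∈ [0,1] of revenue R is delivered with certainty and the remainder is delivered only when the government is honest (probability θ), then the expected delivered spending is E[G] = (θ + (1-θ)φ)·R, and the map φ ↦ θ + (1-θ)φ is nondecreasing, strictly increasing when θ < 1. Consequently the interior optimality condition U'(C*) = θ + (1-θ)φ yields C*(φ) nonincreasing in φ (strictly decreasing when θ < 1 and U' strictly decreasing), so optimal revenue Y - C*(φ) is nondecreasing in φ. -/
import Mathlib


/-- Partial enforcement raises the static scale rule: with a verified share `φ`,
expected delivery is `(θ + (1-θ)φ)·R`; the slope `φ ↦ θ + (1-θ)φ` is nondecreasing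
(strictly increasing when `θ < 1`), hence `C*(φ) = (U')⁻¹(θ + (1-θ)φ)` is nonincreasing
(strictly decreasing when `θ < 1`) and optimal revenue `Y - C*(φ)` is nondecreasing. -/
theorem partial_enforcement_raises_scale
    (θ : ℝ) (hθ : θ ∈ Set.Icc (0:ℝ) 1)
    (U' Cstar : ℝ → ℝ)
    (hanti : StrictAnti U')
    (hinv : ∀ s ∈ Set.Icc θ 1, U' (Cstar s) = s)
    (Y : ℝ) :
    (∀ φ R : ℝ, θ * R + (1 - θ) * (φ * R) = (θ + (1 - θ) * φ) * R) ∧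
    MonotoneOn (fun φ => θ + (1 - θ) * φ) (Set.Icc 0 1) ∧
    (θ < 1 → StrictMonoOn (fun φ => θ + (1 - θ) * φ) (Set.Icc 0 1)) ∧
    AntitoneOn (fun φ => Cstar (θ + (1 - θ) * φ)) (Set.Icc 0 1) ∧
    (θ < 1 → StrictAntiOn (fun φ => Cstar (θ + (1 - θ) * φ)) (Set.Icc 0 1)) ∧
    MonotoneOn (fun φ => Y - Cstar (θ + (1 - θ) * φ)) (Set.Icc 0 1) := by
  obtain ⟨hθ0, hθ1⟩ := hθ
  have hmem : ∀ φ ∈ Set.Icc (0:ℝ) 1, θ + (1 - θ) * φ ∈ Set.Icc θ 1 := by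
    rintro φ ⟨h0, h1⟩
    constructor
    · nlinarith
    · nlinarith
  -- Cstar is strictly antitone on [θ,1]
  have hC : ∀ s ∈ Set.Icc θ 1, ∀ t ∈ Set.Icc θ 1, s < t → Cstar t < Cstar s := by
    intro s hs t ht hst
    by_contra h
    push_neg at h
    rcases lt_or_eq_of_le h with h' | h'
    · have := hanti h'
      rw [hinv s hs, hinv t ht] at this
      linarith
    · rw [← hinv s hs, ← hinv t ht, h'] at hst
      exact lt_irrefl _ hst
  have hslope : ∀ φ ψ : ℝ, φ ≤ ψ → θ + (1 - θ) * φ ≤ θ + (1 - θ) * ψ := by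
    intro φ ψ h; nlinarith
  have hCmono : AntitoneOn (fun φ => Cstar (θ + (1 - θ) * φ)) (Set.Icc 0 1) := by
    intro φ hφ ψ hψ h
    rcases lt_or_eq_of_le (hslope φ ψ h) with h' | h'
    · exact le_of_lt (hC _ (hmem φ hφ) _ (hmem ψ hψ) h')
    · simp [h']
  refine ⟨fun φ R => by ring, fun φ hφ ψ hψ h => hslope φ ψ h, ?_, hCmono, ?_, ?_⟩
  · intro hlt φ hφ ψ hψ h
    simp only
    nlinarith
  · intro hlt φ hφ ψ hψ h
    have : θ + (1 - θ) * φ < θ + (1 - θ) * ψ := by nlinarith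
    exact hC _ (hmem φ hφ) _ (hmem ψ hψ) this
  · intro φ hφ ψ hψ h
    have := hCmono hφ hψ h
    simp only at this ⊢
    linarith
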